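/- Let $f : \mathbb{R} \to \mathbb{C}$ be the restriction to the real line of an entire function $F : \mathbb{C} \to \mathbb{C}$ satisfying $|F(t + si)| \leq e^{2\pi h |s|}$ for all $t, s \in \mathbb{R}$, where $h > 0$, and additionally $|F(z)| \leq 1$ when $z$ is real. Suppose $f(x_0) \neq 0$ for some $x_0 \in \mathbb{R}$. Then $\int_0^{T} \mathrm{card}(\{s \in \mathbb{R} : |s| \leq t, \; f(x_0 + s) = 0\}) \, \frac{dt}{t} \leq 4 T h + \log \frac{1}{|f(x_0)|}$ for every $T > 0$, where zeros are counted with multiplicity. -/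

import Mathlib

/-!
Jensen's formula on the disc of radius `T` about `x₀` writes `circleAverage log ‖F‖ - log ‖F x₀‖`
as `∑ ord_u F · log (T / ‖x₀ - u‖)` over the zeros `u` of the disc; all terms are nonnegative,
and the real zeros `x₀ + s` alone give the left-hand side, because
`∫₀ᵀ 𝟙[|s| ≤ t] dt / t = log (T / |s|)`. On the circle `log ‖F‖ ≤ 2πhT |sin θ|`, whose average
is `4hT`.
-/

open MeasureTheory Real Metric MeromorphicOn Finset

theorem integral_abs_sin_zero_two_pi : ∫ θ in (0 : ℝ)..2 * π, |sin θ| = 4 := by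
  have hsin : ∀ θ ∈ Set.uIcc 0 π, |sin θ| = sin θ := fun θ hθ => by
    rw [Set.uIcc_of_le pi_pos.le] at hθ
    exact abs_of_nonneg (sin_nonneg_of_nonneg_of_le_pi hθ.1 hθ.2)
  have hshift : ∫ θ in π..2 * π, |sin θ| = ∫ θ in (0 : ℝ)..π, |sin θ| := by
    simpa [sin_add_pi, two_mul] using Eq.symm <|
      intervalIntegral.integral_comp_add_right (fun θ => |sin θ|) (a := 0) (b := π) π
  rw [← intervalIntegral.integral_add_adjacent_intervals (b := π)
    (continuous_sin.abs.intervalIntegrable _ _) (continuous_sin.abs.intervalIntegrable _ _),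
    hshift, intervalIntegral.integral_congr hsin, integral_sin]
  norm_num

theorem circleAverage_abs_im (x R : ℝ) :
    circleAverage (fun z : ℂ => |z.im|) x R = 2 * |R| / π := by
  have him : ∀ θ, |(circleMap (x : ℂ) R θ).im| = |R| * |sin θ| := fun θ => by
    simp [circleMap, abs_mul, Complex.exp_ofReal_mul_I_im]
  simp only [circleAverage_def, him, intervalIntegral.integral_const_mul,
    integral_abs_sin_zero_two_pi, smul_eq_mul]
  field_simp
  ring

theorem circleAverage_log_norm_le_of_norm_le_exp_abs_im {f : ℂ → ℂ} {h : ℝ} (hh : 0 ≤ h)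
    (hf : ∀ z, ‖f z‖ ≤ exp (2 * π * h * |z.im|)) {x R : ℝ}
    (hfR : MeromorphicOn f (sphere (x : ℂ) |R|)) :
    circleAverage (log ‖f ·‖) x R ≤ 4 * h * |R| := by
  have hlog : ∀ z, log ‖f z‖ ≤ 2 * π * h * |z.im| := fun z => by
    rcases eq_or_ne (f z) 0 with hz | hz
    · rw [hz, norm_zero, log_zero]
      positivity
    · exact (log_le_iff_le_exp (norm_pos_iff.mpr hz)).mpr (hf z)
  have hcont : Continuous fun z : ℂ => 2 * π * h * |z.im| := by fun_prop
  calc circleAverage (log ‖f ·‖) x R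
      ≤ circleAverage (fun z : ℂ => 2 * π * h * |z.im|) x R :=
        circleAverage_mono hfR.circleIntegrable_log_norm
          hcont.continuousOn.circleIntegrable' fun z _ => hlog z
    _ = 4 * h * |R| := by
        simp_rw [← smul_eq_mul (2 * π * h)]
        rw [circleAverage_fun_smul, circleAverage_abs_im, smul_eq_mul]
        field_simp
        ring

theorem AnalyticOnNhd.one_le_divisor {f : ℂ → ℂ} {U : Set ℂ} {u : ℂ}
    (hf : AnalyticOnNhd ℂ f U) (hu : u ∈ U) (hfu : f u = 0) (hord : analyticOrderAt f u ≠ ⊤) :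
    1 ≤ divisor f U u := by
  obtain ⟨n, hn⟩ := ENat.ne_top_iff_exists.mp hord
  have hn0 : n ≠ 0 := by
    rintro rfl
    exact (hf u hu).analyticOrderAt_eq_zero.mp hn.symm hfu
  rw [hf.divisor_apply hu, ← hn]
  simp only [ENat.map_natCast, WithTop.untop₀_coe]
  omega

theorem AnalyticOnNhd.one_le_divisor_closedBall {f : ℂ → ℂ} {c u : ℂ} {R : ℝ}
    (hf : AnalyticOnNhd ℂ f (closedBall c R)) (hfc : f c ≠ 0) (hu : u ∈ closedBall c R)
    (hfu : f u = 0) : 1 ≤ divisor f (closedBall c R) u := by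
  have hc : c ∈ closedBall c R := mem_closedBall_self (dist_nonneg.trans hu)
  refine hf.one_le_divisor hu hfu <| hf.analyticOrderAt_ne_top_of_isPreconnected
    (convex_closedBall c R).isPreconnected hc hu ?_
  rw [(hf c hc).analyticOrderAt_eq_zero.mpr hfc]
  exact ENat.zero_ne_top

theorem AnalyticOnNhd.finite_zeros_closedBall {f : ℂ → ℂ} {c : ℂ} {R : ℝ}
    (hf : AnalyticOnNhd ℂ f (closedBall c R)) (hfc : f c ≠ 0) :
    {u | u ∈ closedBall c R ∧ f u = 0}.Finite :=
  ((divisor f (closedBall c R)).finiteSupport (isCompact_closedBall c R)).subset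
    fun _ hu => (zero_lt_one.trans_le (hf.one_le_divisor_closedBall hfc hu.1 hu.2)).ne'

-- At `u = c` the left-hand side is `log 0 = 0`.
theorem log_mul_inv_norm_sub_nonneg {c u : ℂ} {R : ℝ} (hu : u ∈ closedBall c R) :
    0 ≤ log (R * ‖c - u‖⁻¹) := by
  rcases eq_or_ne ‖c - u‖ 0 with h | h
  · simp [h]
  · rw [← div_eq_mul_inv]
    refine log_nonneg ((one_le_div (lt_of_le_of_ne (norm_nonneg _) h.symm)).mpr ?_)
    rwa [← dist_eq_norm, dist_comm]

theorem AnalyticOnNhd.sum_log_le_circleAverage_log_norm_sub {f : ℂ → ℂ} {c : ℂ} {R : ℝ}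
    (hR : 0 < R) (hf : AnalyticOnNhd ℂ f (closedBall c R)) (hfc : f c ≠ 0) {Z : Finset ℂ}
    (hZ : ∀ u ∈ Z, u ∈ closedBall c R ∧ f u = 0) :
    ∑ u ∈ Z, Real.log (R * ‖c - u‖⁻¹) ≤
      circleAverage (Real.log ‖f ·‖) c R - Real.log ‖f c‖ := by
  set D := divisor f (closedBall c R)
  have hfin := D.finiteSupport (isCompact_closedBall c R)
  have hjensen := (abs_of_pos hR ▸ hf).circleAverage_log_norm hR.ne' hfc
  rw [abs_of_pos hR] at hjensen
  have hterm_nonneg : ∀ u, 0 ≤ D u * Real.log (R * ‖c - u‖⁻¹) := fun u => by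
    by_cases hu : u ∈ closedBall c R
    · exact mul_nonneg (by exact_mod_cast hf.divisor_nonneg u) (log_mul_inv_norm_sub_nonneg hu)
    · simp [D, hu]
  have hD : ∀ u ∈ Z, 1 ≤ D u := fun u hu =>
    hf.one_le_divisor_closedBall hfc (hZ u hu).1 (hZ u hu).2
  have hZD : Z ⊆ hfin.toFinset := fun u hu => by
    simpa using (zero_lt_one.trans_le (hD u hu)).ne'
  calc ∑ u ∈ Z, Real.log (R * ‖c - u‖⁻¹)
      ≤ ∑ u ∈ Z, D u * Real.log (R * ‖c - u‖⁻¹) := sum_le_sum fun u hu =>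
        le_mul_of_one_le_left (log_mul_inv_norm_sub_nonneg (hZ u hu).1) (by exact_mod_cast hD u hu)
    _ ≤ ∑ u ∈ hfin.toFinset, D u * Real.log (R * ‖c - u‖⁻¹) :=
        sum_le_sum_of_subset_of_nonneg hZD fun u _ _ => hterm_nonneg u
    _ = ∑ᶠ u, D u * Real.log (R * ‖c - u‖⁻¹) :=
        (finsum_eq_sum_of_support_subset _ fun u hu => by
          simpa using left_ne_zero_of_mul hu).symm
    _ = circleAverage (Real.log ‖f ·‖) c R - Real.log ‖f c‖ := by
        rw [hjensen]
        ring

theorem setIntegral_indicator_Icc_inv {a T : ℝ} (ha : 0 < a) (haT : a ≤ T) :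
    ∫ t in Set.Ioc 0 T, (Set.Icc a T).indicator (·⁻¹) t = log (T / a) := by
  rw [integral_indicator measurableSet_Icc, Measure.restrict_restrict measurableSet_Icc,
    Set.inter_eq_left.mpr (Set.Icc_subset_Ioc_iff haT |>.mpr ⟨ha, le_rfl⟩),
    integral_Icc_eq_integral_Ioc, ← intervalIntegral.integral_of_le haT,
    integral_inv_of_pos ha (ha.trans_le haT)]

theorem setIntegral_card_filter_le_div {ι : Type*} (K : Finset ι) (r : ι → ℝ) {T : ℝ}
    (hr : ∀ i ∈ K, 0 < r i ∧ r i ≤ T) :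
    ∫ t in Set.Ioc 0 T, (#{i ∈ K | r i ≤ t} : ℝ) / t = ∑ i ∈ K, log (T / r i) := by
  have hsum : ∀ t ∈ Set.Ioc 0 T,
      (#{i ∈ K | r i ≤ t} : ℝ) / t = ∑ i ∈ K, (Set.Icc (r i) T).indicator (·⁻¹) t := by
    intro t ht
    rw [card_filter, Nat.cast_sum, sum_div]
    refine sum_congr rfl fun i _ => ?_
    by_cases hit : r i ≤ t <;> simp [hit, ht.2]
  have hint : ∀ i ∈ K,
      Integrable ((Set.Icc (r i) T).indicator (·⁻¹)) (volume.restrict (Set.Ioc 0 T)) := by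
    intro i hi
    have hcont : ContinuousOn (·⁻¹) (Set.Icc (r i) T) :=
      continuousOn_inv₀.mono fun t ht => ((hr i hi).1.trans_le ht.1).ne'
    exact (hcont.integrableOn_Icc.integrable_indicator measurableSet_Icc).restrict
  rw [setIntegral_congr_fun measurableSet_Ioc hsum, integral_finsetSum _ hint]
  exact sum_congr rfl fun i hi => setIntegral_indicator_Icc_inv (hr i hi).1 (hr i hi).2

theorem AnalyticOnNhd.exists_finset_zeros_setIntegral_card_real_zeros_div_eq {f : ℂ → ℂ}
    {x T : ℝ} (hf : AnalyticOnNhd ℂ f (closedBall (x : ℂ) T)) (hfx : f x ≠ 0) :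
    ∃ Z : Finset ℂ, (∀ u ∈ Z, u ∈ closedBall (x : ℂ) T ∧ f u = 0) ∧
      ∫ t in Set.Ioc 0 T, (Nat.card {s : ℝ | |s| ≤ t ∧ f ((x + s : ℝ) : ℂ) = 0} : ℝ) / t =
        ∑ u ∈ Z, Real.log (T * ‖(x : ℂ) - u‖⁻¹) := by
  have hshift_inj : Function.Injective fun s : ℝ => ((x + s : ℝ) : ℂ) :=
    Complex.ofReal_injective.comp (add_right_injective x)
  have hdist : ∀ s : ℝ, dist ((x + s : ℝ) : ℂ) x = |s| := fun s => by simp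
  have hfin : {s : ℝ | |s| ≤ T ∧ f ((x + s : ℝ) : ℂ) = 0}.Finite :=
    ((hf.finite_zeros_closedBall hfx).preimage hshift_inj.injOn).subset
      fun s hs => ⟨(hdist s).trans_le hs.1, hs.2⟩
  set S := hfin.toFinset
  have hmemS : ∀ s, s ∈ S ↔ |s| ≤ T ∧ f ((x + s : ℝ) : ℂ) = 0 := fun s => hfin.mem_toFinset
  have hS : ∀ s ∈ S, 0 < |s| ∧ |s| ≤ T := fun s hs => by
    obtain ⟨hsT, hfs⟩ := (hmemS s).mp hs
    refine ⟨abs_pos.mpr ?_, hsT⟩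
    rintro rfl
    exact hfx (by simpa using hfs)
  have hcount : ∀ t ∈ Set.Ioc 0 T,
      (Nat.card {s : ℝ | |s| ≤ t ∧ f ((x + s : ℝ) : ℂ) = 0} : ℝ) / t =
        (#{s ∈ S | |s| ≤ t} : ℝ) / t := fun t ht => by
    rw [← Set.ncard_coe_finset, ← Nat.card_coe_set_eq]
    congr 4
    ext s
    simp only [Set.mem_ofPred_eq, coe_filter, hmemS]
    exact ⟨fun hs => ⟨⟨hs.1.trans ht.2, hs.2⟩, hs.1⟩, fun hs => ⟨hs.2, hs.1.2⟩⟩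
  refine ⟨S.image fun s : ℝ => ((x + s : ℝ) : ℂ), fun u hu => ?_, ?_⟩
  · obtain ⟨s, hs, rfl⟩ := mem_image.mp hu
    exact ⟨(hdist s).trans_le ((hmemS s).mp hs).1, ((hmemS s).mp hs).2⟩
  · rw [setIntegral_congr_fun measurableSet_Ioc hcount, setIntegral_card_filter_le_div S abs hS,
      sum_image hshift_inj.injOn]
    refine sum_congr rfl fun s _ => ?_
    rw [← dist_eq_norm, dist_comm, hdist, div_eq_mul_inv]

theorem jensen_zero_count_bound_general (F : ℂ → ℂ) (hF : Differentiable ℂ F)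
    (h : ℝ) (hh : 0 < h)
    (hgrowth : ∀ t s : ℝ, ‖F (t + s * Complex.I)‖ ≤ Real.exp (2 * π * h * |s|))
    (x0 : ℝ) (h0 : F (x0 : ℂ) ≠ 0) (T : ℝ) (hT : 0 < T) :
    (∫ t in Set.Ioc (0 : ℝ) T,
        (Nat.card {s : ℝ | |s| ≤ t ∧ F ((x0 + s : ℝ) : ℂ) = 0} : ℝ) / t) ≤
      4 * T * h + Real.log (1 / ‖F (x0 : ℂ)‖) := by
  have hFa : AnalyticOnNhd ℂ F (closedBall (x0 : ℂ) T) := fun z _ => hF.analyticAt z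
  obtain ⟨Z, hZ, hcount⟩ := hFa.exists_finset_zeros_setIntegral_card_real_zeros_div_eq h0
  have hcircle : circleAverage (log ‖F ·‖) x0 T ≤ 4 * h * T := by
    simpa [abs_of_pos hT] using circleAverage_log_norm_le_of_norm_le_exp_abs_im hh.le
      (fun z => by simpa only [Complex.re_add_im] using hgrowth z.re z.im)
      (x := x0) (R := T) fun z _ => (hF.analyticAt z).meromorphicAt
  calc _ = ∑ u ∈ Z, log (T * ‖(x0 : ℂ) - u‖⁻¹) := hcount
    _ ≤ circleAverage (log ‖F ·‖) x0 T - log ‖F x0‖ :=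
        hFa.sum_log_le_circleAverage_log_norm_sub hT h0 hZ
    _ ≤ 4 * T * h + log (1 / ‖F x0‖) := by
        rw [one_div, log_inv]
        linarith

theorem jensen_zero_count_bound (F : ℂ → ℂ) (hF : Differentiable ℂ F)
    (h : ℝ) (hh : 0 < h)
    (hgrowth : ∀ t s : ℝ, ‖F (t + s * Complex.I)‖ ≤ Real.exp (2 * π * h * |s|))
    (hbd : ∀ t : ℝ, ‖F (t : ℂ)‖ ≤ 1)
    (x0 : ℝ) (h0 : F (x0 : ℂ) ≠ 0) (T : ℝ) (hT : 0 < T) :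
    (∫ t in Set.Ioc (0 : ℝ) T,
        (Nat.card {s : ℝ | |s| ≤ t ∧ F ((x0 + s : ℝ) : ℂ) = 0} : ℝ) / t) ≤
      4 * T * h + Real.log (1 / ‖F (x0 : ℂ)‖) :=
  jensen_zero_count_bound_general F hF h hh hgrowth x0 h0 T hT
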